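/- arXiv:2006.01935 — 3 statements merged into one kernel-verified Lean document; each statement's English description precedes it below -/
import Mathlib

section
/- Let Ω₁ = B((-1,0,0);2), Ω₂ = B((1,0,0);2) ⊂ ℝ³, δᵢ(x) = max{0, 2 - ‖x - mᵢ‖} with m₁=(-1,0,0), m₂=(1,0,0), and θ₁ = δ₁/(δ₁+δ₂) on Ω₁ ∪ Ω₂. Let x ∈ S = {(0,x₂,x₃) : x₂²+x₃²=3}. Then θ₁ has no continuous extension to x: there exist sequences (xₙ) ⊂ Ω₁\closure(Ω₂) and (yₙ) ⊂ Ω₁∩Ω₂ both converging to x such that θ₁(xₙ) → 1 while limsup θ₁(yₙ) ≤ 1/2. -/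
open Metric Set Filter Topology

noncomputable abbrev E3 := EuclideanSpace ℝ (Fin 3)

noncomputable def m1 : E3 := (WithLp.equiv 2 (Fin 3 → ℝ)).symm ![(-1 : ℝ), 0, 0]
noncomputable def m2 : E3 := (WithLp.equiv 2 (Fin 3 → ℝ)).symm ![(1 : ℝ), 0, 0]

noncomputable def del (m x : E3) : ℝ := max 0 (2 - ‖x - m‖)

noncomputable def theta1 (x : E3) : ℝ := del m1 x / (del m1 x + del m2 x)

/-! On the plane `{y₀ = 0}` the two centres are equidistant, so `θ₁ = 1/2` on the part of that
plane inside both balls; approaching a point of `S` along that plane gives the sequence `b`. Just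
to the left of the plane, points of `S` are limits of points of `Ω₁` outside the closed ball `Ω̄₂`,
where `δ₂ = 0` and so `θ₁ = 1`. -/

lemma del_pos_of_mem_ball {m y : E3} (h : y ∈ ball m 2) : 0 < del m y :=
  lt_max_of_lt_right (by rw [mem_ball_iff_norm] at h; linarith)

lemma del_eq_zero_of_notMem_ball {m y : E3} (h : y ∉ ball m 2) : del m y = 0 :=
  max_eq_left (by rw [mem_ball_iff_norm, not_lt] at h; linarith)

lemma theta1_eq_one_of_notMem_ball {y : E3} (h1 : y ∈ ball m1 2) (h2 : y ∉ ball m2 2) :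
    theta1 y = 1 := by
  rw [theta1, del_eq_zero_of_notMem_ball h2, add_zero, div_self (del_pos_of_mem_ball h1).ne']

lemma theta1_eq_half_of_norm_sub_eq {y : E3} (h1 : y ∈ ball m1 2) (h : ‖y - m1‖ = ‖y - m2‖) :
    theta1 y = 1 / 2 := by
  have hdel : del m2 y = del m1 y := by rw [del, del, h]
  rw [theta1, hdel, div_eq_iff (by linarith [del_pos_of_mem_ball h1])]
  ring

lemma norm_sq_eq_coords (y : E3) : ‖y‖ ^ 2 = y 0 ^ 2 + y 1 ^ 2 + y 2 ^ 2 := by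
  simp [EuclideanSpace.norm_sq_eq, Fin.sum_univ_three]

lemma norm_sub_m1_sq (y : E3) : ‖y - m1‖ ^ 2 = (y 0 + 1) ^ 2 + y 1 ^ 2 + y 2 ^ 2 := by
  simp [norm_sq_eq_coords, m1]

lemma norm_sub_m2_sq (y : E3) : ‖y - m2‖ ^ 2 = (y 0 - 1) ^ 2 + y 1 ^ 2 + y 2 ^ 2 := by
  simp [norm_sq_eq_coords, m2]

lemma mem_ball_m1_iff (y : E3) : y ∈ ball m1 2 ↔ (y 0 + 1) ^ 2 + y 1 ^ 2 + y 2 ^ 2 < 4 := by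
  rw [mem_ball_iff_norm, ← norm_sub_m1_sq, ← sq_lt_sq₀ (norm_nonneg _) zero_le_two]
  norm_num

lemma mem_closedBall_m2_iff (y : E3) :
    y ∈ closedBall m2 2 ↔ (y 0 - 1) ^ 2 + y 1 ^ 2 + y 2 ^ 2 ≤ 4 := by
  rw [mem_closedBall_iff_norm, ← norm_sub_m2_sq, ← sq_le_sq₀ (norm_nonneg _) zero_le_two]
  norm_num

lemma mem_ball_m2_iff (y : E3) : y ∈ ball m2 2 ↔ (y 0 - 1) ^ 2 + y 1 ^ 2 + y 2 ^ 2 < 4 := by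
  rw [mem_ball_iff_norm, ← norm_sub_m2_sq, ← sq_lt_sq₀ (norm_nonneg _) zero_le_two]
  norm_num

lemma norm_sub_m1_eq_norm_sub_m2 {y : E3} (hy : y 0 = 0) : ‖y - m1‖ = ‖y - m2‖ := by
  rw [← sq_eq_sq₀ (norm_nonneg _) (norm_nonneg _), norm_sub_m1_sq, norm_sub_m2_sq, hy]
  ring

section OnCircle

variable {x : E3} (hx0 : x 0 = 0) (hx12 : x 1 ^ 2 + x 2 ^ 2 = 3)
include hx0 hx12

lemma sub_smul_single_mem_ball_diff_closure {t : ℝ} (ht0 : 0 < t) (ht2 : t < 2) :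
    x - t • EuclideanSpace.single 0 1 ∈ ball m1 2 \ closure (ball m2 2) := by
  rw [closure_ball m2 two_ne_zero, Set.mem_sdiff, mem_ball_m1_iff, mem_closedBall_m2_iff]
  simp [hx0]
  constructor <;> nlinarith

lemma smul_mem_ball_inter {s : ℝ} (hs : |s| < 1) : s • x ∈ ball m1 2 ∩ ball m2 2 := by
  have hs2 : s ^ 2 < 1 := by rw [← sq_abs]; nlinarith [abs_nonneg s]
  rw [mem_inter_iff, mem_ball_m1_iff, mem_ball_m2_iff]
  simp only [PiLp.smul_apply, smul_eq_mul, hx0, mul_zero]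
  constructor <;> nlinarith

end OnCircle

/-- `θ₁` has no continuous extension to any point of the intersection circle `S`:
there are sequences in `Ω₁ \ closure Ω₂` and in `Ω₁ ∩ Ω₂` converging to `x` along which
`θ₁ → 1` and `limsup θ₁ ≤ 1/2` respectively. -/
theorem stmt_1 (x : E3) (hx : x 0 = 0 ∧ (x 1) ^ 2 + (x 2) ^ 2 = 3) :
    ∃ a b : ℕ → E3,
      (∀ n, a n ∈ ball m1 2 \ closure (ball m2 2)) ∧
      (∀ n, b n ∈ ball m1 2 ∩ ball m2 2) ∧
      Tendsto a atTop (𝓝 x) ∧ Tendsto b atTop (𝓝 x) ∧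
      Tendsto (fun n => theta1 (a n)) atTop (𝓝 1) ∧
      Filter.limsup (fun n => theta1 (b n)) atTop ≤ 1 / 2 := by
  obtain ⟨hx0, hx12⟩ := hx
  set ε : ℕ → ℝ := fun n => 1 / (n + 1)
  have hε_pos (n : ℕ) : 0 < ε n := by positivity
  have hε_le (n : ℕ) : ε n ≤ 1 := div_le_one_of_le₀ (by simp) (by positivity)
  have hε : Tendsto ε atTop (𝓝 0) := tendsto_one_div_add_atTop_nhds_zero_nat
  set a : ℕ → E3 := fun n => x - ε n • EuclideanSpace.single 0 1
  set b : ℕ → E3 := fun n => (1 - ε n) • x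
  have ha (n : ℕ) : a n ∈ ball m1 2 \ closure (ball m2 2) :=
    sub_smul_single_mem_ball_diff_closure hx0 hx12 (hε_pos n) (by linarith [hε_le n])
  have hb (n : ℕ) : b n ∈ ball m1 2 ∩ ball m2 2 :=
    smul_mem_ball_inter hx0 hx12 (abs_lt.2 ⟨by linarith [hε_le n], by linarith [hε_pos n]⟩)
  have hθa (n : ℕ) : theta1 (a n) = 1 :=
    theta1_eq_one_of_notMem_ball (ha n).1 fun h => (ha n).2 (subset_closure h)
  have hθb (n : ℕ) : theta1 (b n) = 1 / 2 :=
    theta1_eq_half_of_norm_sub_eq (hb n).1 (norm_sub_m1_eq_norm_sub_m2 (by simp [b, hx0]))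
  refine ⟨a, b, ha, hb, ?_, ?_, by simp [hθa], by simp [hθb]⟩
  · simpa using tendsto_const_nhds.sub (hε.smul_const (EuclideanSpace.single 0 1 : E3))
  · simpa using ((tendsto_const_nhds (x := (1 : ℝ))).sub hε).smul_const x
end

section
/- Let 0 < α < π/2 and let v₁,…,v_r be unit vectors in ℝ³ such that there exists a unit vector u with u·v_t ≥ cos α for all t. Then the convex cone {Σₜ λₜ vₜ : λₜ ≥ 0} is contained in ∪ₜ Kₜ where Kₜ = {w ∈ ℝ³ : angle(w, vₜ) ≤ α} — equivalently: every nonzero vector w of the form Σₜ λₜ vₜ with all λₜ ≥ 0 satisfies angle(w, vₜ) ≤ α for some t. -/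
open Real
open scoped RealInnerProductSpace

/-- Covering of the generalized cone by circular cones: if unit vectors `v₁,…,v_r` all make
angle at most `α` with a unit vector `u` (i.e. `u·vₜ ≥ cos α`), then every nonzero
nonnegative combination `w = Σ λₜ vₜ` makes angle at most `α` with some `vₜ`, i.e.
`⟪w, vₜ⟫ ≥ ‖w‖ cos α` for some `t`. -/
theorem stmt_13 (r : ℕ) (v : Fin r → E3) (hv : ∀ t, ‖v t‖ = 1)
    (u : E3) (hu : ‖u‖ = 1) (α : ℝ) (hα0 : 0 < α) (hαπ : α < π / 2)
    (hangle : ∀ t, Real.cos α ≤ ⟪u, v t⟫)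
    (l : Fin r → ℝ) (hl : ∀ t, 0 ≤ l t) (hw : (∑ t, l t • v t) ≠ 0) :
    ∃ t, ‖∑ s, l s • v s‖ * Real.cos α ≤ ⟪∑ s, l s • v s, v t⟫ := by
  set w : E3 := ∑ t, l t • v t with hwdef
  by_contra h
  push_neg at h
  have hcos : 0 < Real.cos α := Real.cos_pos_of_mem_Ioo ⟨by linarith [Real.pi_pos], hαπ⟩
  obtain ⟨t₀, ht₀⟩ : ∃ t, l t ≠ 0 := by
    by_contra h'
    push_neg at h'
    exact hw (by simp [hwdef, h'])
  have ht₀' : 0 < l t₀ := lt_of_le_of_ne (hl t₀) (Ne.symm ht₀)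
  have h1 : ⟪w, w⟫ = ∑ t, l t * ⟪w, v t⟫ := by
    rw [hwdef]
    rw [inner_sum]
    exact Finset.sum_congr rfl fun t _ => real_inner_smul_right _ _ _
  have h2 : ⟪u, w⟫ = ∑ t, l t * ⟪u, v t⟫ := by
    rw [hwdef, inner_sum]
    exact Finset.sum_congr rfl fun t _ => real_inner_smul_right _ _ _
  have h3 : (∑ t, l t) * Real.cos α ≤ ⟪u, w⟫ := by
    rw [h2, Finset.sum_mul]
    exact Finset.sum_le_sum fun t _ => by
      rw [mul_comm (l t) (Real.cos α), mul_comm (l t) _]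
      exact mul_le_mul_of_nonneg_right (hangle t) (hl t)
  have h4 : ⟪u, w⟫ ≤ ‖w‖ := by
    have := real_inner_le_norm u w
    rwa [hu, one_mul] at this
  have h5 : ⟪w, w⟫ < ∑ t, l t * (‖w‖ * Real.cos α) := by
    rw [h1]
    refine Finset.sum_lt_sum (fun t _ => ?_) ⟨t₀, Finset.mem_univ _, ?_⟩
    · exact mul_le_mul_of_nonneg_left (le_of_lt (h t)) (hl t)
    · exact mul_lt_mul_of_pos_left (h t₀) ht₀'
  have h6 : ∑ t, l t * (‖w‖ * Real.cos α) = ((∑ t, l t) * Real.cos α) * ‖w‖ := by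
    rw [← Finset.sum_mul]; ring
  have h7 : ((∑ t, l t) * Real.cos α) * ‖w‖ ≤ ‖w‖ * ‖w‖ :=
    mul_le_mul_of_nonneg_right (le_trans h3 h4) (norm_nonneg w)
  have h8 : ⟪w, w⟫ = ‖w‖ * ‖w‖ := real_inner_self_eq_norm_mul_norm w
  linarith [h5, h6 ▸ h5]
end

section
/- Let a, b, α be real numbers with 0 < α < π/2, b ≥ 1, 0 < a ≤ b cos α, and a = (2b-1)/(2b cos α - a). Then a ≤ 2/cos α. -/
open Real

/-- The elementary inequality from the proof of the cone-distance lemma: if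
`0 < α < π/2`, `b ≥ 1`, `0 < a ≤ b cos α` and `a = (2b-1)/(2b cos α - a)`, then
`a ≤ 2/cos α`. -/
theorem stmt_14 (a b α : ℝ) (hα0 : 0 < α) (hαπ : α < π / 2) (hb : 1 ≤ b)
    (ha0 : 0 < a) (hab : a ≤ b * Real.cos α)
    (heq : a = (2 * b - 1) / (2 * b * Real.cos α - a)) :
    a ≤ 2 / Real.cos α := by
  set c := Real.cos α with hc
  have hc0 : 0 < c := Real.cos_pos_of_mem_Ioo ⟨by linarith [Real.pi_pos], hαπ⟩
  have hc1 : c ≤ 1 := Real.cos_le_one α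
  have hD : 0 < 2 * b * c - a := by nlinarith
  have key : a * (2 * b * c - a) = 2 * b - 1 := by
    field_simp at heq; linarith
  rw [le_div_iff₀ hc0]
  by_cases h2 : a ≤ 2
  · nlinarith
  · push_neg at h2
    have hac : 1 < a * c := by nlinarith
    nlinarith
end
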